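/- arXiv:math/0509068 — 4 statements merged into one kernel-verified Lean document; each statement's English description precedes it below -/
import Mathlib

section
/- Let d ≥ 0 and let a = (a_n)_{n≥0} be a sequence of complex numbers. Then there exist a polynomial R ∈ ℂ[t] and complex numbers λ_1, …, λ_d such that the identity of formal power series Σ_{n≥0} a_n t^n · ∏_{i=1}^d (1 − λ_i t) = R(t) holds (i.e., Σ a_n t^n is a rational power series with denominator ∏_{i=1}^d (1 − λ_i t)) if and only if there exists N such that the Hankel determinants H_{n,k}(a) vanish for all k > d and all n ≥ N. -/
open Filter Polynomial

/-- The `k × k` Hankel determinant `H_{n,k}(a)` of a sequence `a`. -/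
noncomputable def hankelDet (a : ℕ → ℂ) (n k : ℕ) : ℂ :=
  Matrix.det (Matrix.of fun i j : Fin k => a (n + i + j))


open Matrix

lemma dj_blocks {n : ℕ} (W : Matrix (Fin n) (Fin n) ℂ) (X : Matrix (Fin n) (Fin 2) ℂ)
    (Y : Matrix (Fin 2) (Fin n) ℂ) (Z : Matrix (Fin 2) (Fin 2) ℂ) (hW : IsUnit W.det) :
    (Matrix.fromBlocks W X Y Z).det * W.det =
      (Matrix.fromBlocks W (X.submatrix id (fun _ : Fin 1 => 0)) (Y.submatrix (fun _ : Fin 1 => 0) id)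
        (Matrix.of fun _ _ : Fin 1 => Z 0 0)).det *
      (Matrix.fromBlocks W (X.submatrix id (fun _ : Fin 1 => 1)) (Y.submatrix (fun _ : Fin 1 => 1) id)
        (Matrix.of fun _ _ : Fin 1 => Z 1 1)).det -
      (Matrix.fromBlocks W (X.submatrix id (fun _ : Fin 1 => 1)) (Y.submatrix (fun _ : Fin 1 => 0) id)
        (Matrix.of fun _ _ : Fin 1 => Z 0 1)).det *
      (Matrix.fromBlocks W (X.submatrix id (fun _ : Fin 1 => 0)) (Y.submatrix (fun _ : Fin 1 => 1) id)
        (Matrix.of fun _ _ : Fin 1 => Z 1 0)).det := by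
  haveI := W.invertibleOfIsUnitDet hW
  have key : ∀ r s : Fin 2,
      (Matrix.fromBlocks W (X.submatrix id (fun _ : Fin 1 => s)) (Y.submatrix (fun _ : Fin 1 => r) id)
        (Matrix.of fun _ _ : Fin 1 => Z r s)).det = W.det * (Z - Y * ⅟W * X) r s := by
    intro r s
    rw [Matrix.det_fromBlocks₁₁]
    congr 1
    rw [Matrix.det_fin_one]
    simp [Matrix.mul_apply, Matrix.sub_apply]
  rw [Matrix.det_fromBlocks₁₁, key, key, key, key, Matrix.det_fin_two]
  ring
open Matrix

noncomputable section

def cornerEmb (n : ℕ) (r : Fin 2) : Fin (n+1) → Fin (n+2) :=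
  fun i => if h : (i:ℕ) < n then ⟨i, by omega⟩ else ⟨n + r, by omega⟩

def tlEmb (n : ℕ) : Fin n → Fin (n+2) := fun i => ⟨i, by omega⟩

def brEmb (n : ℕ) : Fin 2 → Fin (n+2) := fun r => ⟨n + r, by omega⟩

lemma cornerEmb_castAdd {n : ℕ} (r : Fin 2) (i : Fin n) :
    cornerEmb n r (Fin.castAdd 1 i) = tlEmb n i := by
  simp only [cornerEmb, Fin.coe_castAdd]
  rw [dif_pos i.isLt]; rfl

lemma cornerEmb_natAdd {n : ℕ} (r : Fin 2) (i : Fin 1) :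
    cornerEmb n r (Fin.natAdd n i) = brEmb n r := by
  simp only [cornerEmb, Fin.coe_natAdd]
  rw [dif_neg (by omega)]
  rfl

lemma dj_corner_generic {n : ℕ} (A : Matrix (Fin (n+2)) (Fin (n+2)) ℂ)
    (hW : IsUnit (A.submatrix (tlEmb n) (tlEmb n)).det) :
    A.det * (A.submatrix (tlEmb n) (tlEmb n)).det =
      (A.submatrix (cornerEmb n 0) (cornerEmb n 0)).det *
        (A.submatrix (cornerEmb n 1) (cornerEmb n 1)).det -
      (A.submatrix (cornerEmb n 0) (cornerEmb n 1)).det *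
        (A.submatrix (cornerEmb n 1) (cornerEmb n 0)).det := by
  set W := A.submatrix (tlEmb n) (tlEmb n) with hWdef
  set X := A.submatrix (tlEmb n) (brEmb n) with hXdef
  set Y := A.submatrix (brEmb n) (tlEmb n) with hYdef
  set Z := A.submatrix (brEmb n) (brEmb n) with hZdef
  have hA : A.det = (Matrix.fromBlocks W X Y Z).det := by
    rw [← Matrix.det_submatrix_equiv_self (finSumFinEquiv : Fin n ⊕ Fin 2 ≃ Fin (n+2)) A]
    congr 1
    ext i j
    rcases i with i | i <;> rcases j with j | j <;>
      simp [Matrix.fromBlocks, tlEmb, brEmb, finSumFinEquiv, Fin.castAdd, Fin.natAdd,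
        Matrix.submatrix_apply] <;> congr 1 <;> apply Fin.ext <;> simp [Fin.castLE]
  have hc : ∀ r s : Fin 2, (A.submatrix (cornerEmb n r) (cornerEmb n s)).det =
      (Matrix.fromBlocks W (X.submatrix id (fun _ : Fin 1 => s))
        (Y.submatrix (fun _ : Fin 1 => r) id) (Matrix.of fun _ _ : Fin 1 => Z r s)).det := by
    intro r s
    rw [← Matrix.det_submatrix_equiv_self (finSumFinEquiv : Fin n ⊕ Fin 1 ≃ Fin (n+1))]
    congr 1
    ext i j
    rcases i with i | i <;> rcases j with j | j <;>
      simp [Matrix.fromBlocks, Matrix.submatrix_apply, finSumFinEquiv_apply_left,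
        finSumFinEquiv_apply_right, cornerEmb_castAdd, cornerEmb_natAdd,
        hWdef, hXdef, hYdef, hZdef]
  rw [hA, hc, hc, hc, hc]
  exact dj_blocks W X Y Z hW
lemma tlEmb_injective {n : ℕ} : Function.Injective (tlEmb n) := by
  intro a b h
  rw [Fin.ext_iff] at h ⊢
  simpa [tlEmb] using h

lemma dj_corner {n : ℕ} (A : Matrix (Fin (n+2)) (Fin (n+2)) ℂ) :
    A.det * (A.submatrix (tlEmb n) (tlEmb n)).det =
      (A.submatrix (cornerEmb n 0) (cornerEmb n 0)).det *
        (A.submatrix (cornerEmb n 1) (cornerEmb n 1)).det -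
      (A.submatrix (cornerEmb n 0) (cornerEmb n 1)).det *
        (A.submatrix (cornerEmb n 1) (cornerEmb n 0)).det := by
  set Ah : Matrix (Fin (n+2)) (Fin (n+2)) (Polynomial ℂ) := Matrix.charmatrix (-A) with hAh
  set p : Polynomial ℂ :=
    Ah.det * (Ah.submatrix (tlEmb n) (tlEmb n)).det -
      ((Ah.submatrix (cornerEmb n 0) (cornerEmb n 0)).det *
        (Ah.submatrix (cornerEmb n 1) (cornerEmb n 1)).det -
      (Ah.submatrix (cornerEmb n 0) (cornerEmb n 1)).det *
        (Ah.submatrix (cornerEmb n 1) (cornerEmb n 0)).det) with hp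
  have hmap : ∀ ε : ℂ, Ah.map (Polynomial.eval ε) = A + ε • 1 := by
    intro ε
    ext i j
    by_cases h : i = j <;>
      simp [hAh, Matrix.charmatrix_apply, Matrix.diagonal, h, Matrix.one_apply,
        Matrix.add_apply, Matrix.smul_apply, Matrix.map_apply, add_comm]
  have hdet : ∀ (ε : ℂ) (e f : Fin (n+2) → Fin (n+2)) (k : ℕ) (g h : Fin k → Fin (n+2)),
      Polynomial.eval ε (Ah.submatrix g h).det = ((A + ε • 1).submatrix g h).det := by
    intro ε e f k g h
    have := (Polynomial.evalRingHom ε).map_det (Ah.submatrix g h)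
    simp only [RingHom.mapMatrix_apply, Polynomial.coe_evalRingHom] at this
    rw [this, ← Matrix.submatrix_map, hmap]
  have hdet0 : ∀ ε : ℂ, Polynomial.eval ε Ah.det = (A + ε • 1).det := by
    intro ε
    have := (Polynomial.evalRingHom ε).map_det Ah
    simp only [RingHom.mapMatrix_apply, Polynomial.coe_evalRingHom] at this
    rw [this, hmap]
  have hWc : Ah.submatrix (tlEmb n) (tlEmb n) =
      Matrix.charmatrix (-(A.submatrix (tlEmb n) (tlEmb n))) := by
    ext i j
    by_cases h : i = j
    · subst h; simp [hAh, Matrix.charmatrix_apply, Matrix.diagonal]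
    · have h' : tlEmb n i ≠ tlEmb n j := fun hc => h (tlEmb_injective hc)
      simp [hAh, Matrix.charmatrix_apply, Matrix.diagonal, h, h']
  have hq : (Ah.submatrix (tlEmb n) (tlEmb n)).det ≠ 0 := by
    rw [hWc]
    exact (Matrix.charpoly_monic _).ne_zero
  have hroots : Set.Finite {x : ℂ | Polynomial.IsRoot (Ah.submatrix (tlEmb n) (tlEmb n)).det x} :=
    Polynomial.finite_setOf_isRoot hq
  have hpzero : p = 0 := by
    apply Polynomial.eq_zero_of_infinite_isRoot
    apply Set.Infinite.mono (s := {x : ℂ | ¬ Polynomial.IsRoot (Ah.submatrix (tlEmb n) (tlEmb n)).det x})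
    · intro ε hε
      have hWu : IsUnit ((A + ε • 1).submatrix (tlEmb n) (tlEmb n)).det := by
        rw [← hdet ε id id n (tlEmb n) (tlEmb n)]
        exact Ne.isUnit hε
      have := dj_corner_generic (A + ε • 1) hWu
      show Polynomial.IsRoot p ε
      simp only [Polynomial.IsRoot, hp, Polynomial.eval_sub, Polynomial.eval_mul,
        hdet ε id id, hdet0 ε]
      rw [this]; ring
    · have : Set.Infinite (Set.univ : Set ℂ) := Set.infinite_univ
      have heq : {x : ℂ | ¬ Polynomial.IsRoot (Ah.submatrix (tlEmb n) (tlEmb n)).det x} =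
          Set.univ \ {x : ℂ | Polynomial.IsRoot (Ah.submatrix (tlEmb n) (tlEmb n)).det x} := by
        ext x; simp
      rw [heq]
      exact Set.Infinite.diff this hroots
  have := congrArg (Polynomial.eval 0) hpzero
  simp only [hp, Polynomial.eval_sub, Polynomial.eval_mul, hdet (0:ℂ) id id, hdet0 (0:ℂ),
    Polynomial.eval_zero] at this
  simp only [zero_smul, add_zero] at this
  linear_combination this
def midEmb (n : ℕ) : Fin n → Fin (n+2) := fun i => ⟨i+1, by omega⟩
def cskEmb (n : ℕ) : Fin (n+1) → Fin (n+2) := fun i => ⟨i, by omega⟩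
def sucEmb (n : ℕ) : Fin (n+1) → Fin (n+2) := fun i => ⟨i+1, by omega⟩

lemma rot_val {m : ℕ} (x : Fin (m+1)) (h : (x:ℕ) < m) :
    ((finRotate (m+1) x : Fin (m+1)) : ℕ) = x + 1 := by
  rw [finRotate_succ_apply]
  exact Fin.val_add_one_of_lt (by rwa [Fin.lt_iff_val_lt_val, Fin.val_last])

lemma dj_mid {n : ℕ} (A : Matrix (Fin (n+2)) (Fin (n+2)) ℂ) :
    A.det * (A.submatrix (midEmb n) (midEmb n)).det =
      (A.submatrix (cskEmb n) (cskEmb n)).det * (A.submatrix (sucEmb n) (sucEmb n)).det -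
      (A.submatrix (cskEmb n) (sucEmb n)).det * (A.submatrix (sucEmb n) (cskEmb n)).det := by
  set ρ : Equiv.Perm (Fin (n+1)) := finRotate (n+1) with hρ
  have h1 : ∀ i : Fin n, finRotate (n+2) (tlEmb n i) = midEmb n i := by
    intro i
    apply Fin.ext
    have hval : ((tlEmb n i : Fin (n+2)) : ℕ) = (i:ℕ) := rfl
    rw [rot_val (tlEmb n i) (by rw [hval]; exact Nat.lt_succ_of_lt i.isLt), hval]
    simp [midEmb]
  have h2 : ∀ i : Fin (n+1), finRotate (n+2) (cornerEmb n 0 i) = sucEmb n i := by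
    intro i
    apply Fin.ext
    have hval : ((cornerEmb n 0 i : Fin (n+2)) : ℕ) = if (i:ℕ) < n then (i:ℕ) else n := by
      by_cases h : (i:ℕ) < n <;> simp [cornerEmb, h]
    rw [rot_val (cornerEmb n 0 i) (by rw [hval]; split <;> omega), hval]
    simp only [sucEmb]
    split <;> omega
  have h3 : ∀ i : Fin (n+1), finRotate (n+2) (cornerEmb n 1 i) = cskEmb n (ρ i) := by
    intro i
    apply Fin.ext
    by_cases h : (i:ℕ) < n
    · have hval : ((cornerEmb n 1 i : Fin (n+2)) : ℕ) = (i:ℕ) := by simp [cornerEmb, h]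
      rw [rot_val (cornerEmb n 1 i) (by rw [hval]; omega), hval]
      have : ((ρ i : Fin (n+1)) : ℕ) = i + 1 := rot_val i h
      simp [cskEmb, this]
    · have hi : (i:ℕ) = n := by omega
      have hval : (cornerEmb n 1 i : Fin (n+2)) = Fin.last (n+1) := by
        apply Fin.ext; simp [cornerEmb, h, Fin.val_last]
      rw [hval, finRotate_last]
      have hilast : i = Fin.last n := Fin.ext (by simpa using hi)
      have : ρ i = 0 := by rw [hρ, hilast]; exact finRotate_last
      simp [cskEmb, this]
  have key := dj_corner (A.submatrix (finRotate (n+2)) (finRotate (n+2)))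
  rw [Matrix.det_submatrix_equiv_self] at key
  simp only [Matrix.submatrix_submatrix] at key
  rw [show (finRotate (n+2)) ∘ (tlEmb n) = midEmb n from funext h1,
      show (finRotate (n+2)) ∘ (cornerEmb n 0) = sucEmb n from funext h2,
      show (finRotate (n+2)) ∘ (cornerEmb n 1) = (cskEmb n) ∘ ρ from funext h3] at key
  have k1 : A.submatrix (cskEmb n ∘ ⇑ρ) (cskEmb n ∘ ⇑ρ)
      = (A.submatrix (cskEmb n) (cskEmb n)).submatrix ⇑ρ ⇑ρ := rfl
  have k2 : A.submatrix (sucEmb n) (cskEmb n ∘ ⇑ρ)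
      = (A.submatrix (sucEmb n) (cskEmb n)).submatrix id ⇑ρ := rfl
  have k3 : A.submatrix (cskEmb n ∘ ⇑ρ) (sucEmb n)
      = (A.submatrix (cskEmb n) (sucEmb n)).submatrix ⇑ρ id := rfl
  rw [k1, k2, k3, Matrix.det_submatrix_equiv_self ρ, Matrix.det_permute,
    Matrix.det_permute'] at key
  rcases Int.units_eq_one_or (Equiv.Perm.sign ρ) with hs | hs <;> rw [hs] at key <;>
    simp only [Units.val_one, Units.val_neg, Int.cast_one, Int.cast_neg, one_mul, neg_mul,
      mul_neg, neg_neg, Int.reduceNeg] at key <;> rw [key] <;> ring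

lemma dj_hankel (a : ℕ → ℂ) (m n : ℕ) :
    hankelDet a m (n+2) * hankelDet a (m+2) n =
      hankelDet a m (n+1) * hankelDet a (m+2) (n+1) -
        hankelDet a (m+1) (n+1) * hankelDet a (m+1) (n+1) := by
  have key := dj_mid (Matrix.of fun i j : Fin (n+2) => a (m + i + j))
  have h1 : (Matrix.of fun i j : Fin (n+2) => a (m + i + j)).submatrix (midEmb n) (midEmb n)
      = Matrix.of fun i j : Fin n => a ((m+2) + i + j) := by
    ext i j; simp only [Matrix.submatrix_apply, Matrix.of_apply, midEmb]; congr 1; omega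
  have h2 : (Matrix.of fun i j : Fin (n+2) => a (m + i + j)).submatrix (cskEmb n) (cskEmb n)
      = Matrix.of fun i j : Fin (n+1) => a (m + i + j) := by
    ext i j; simp only [Matrix.submatrix_apply, Matrix.of_apply, cskEmb]
  have h3 : (Matrix.of fun i j : Fin (n+2) => a (m + i + j)).submatrix (sucEmb n) (sucEmb n)
      = Matrix.of fun i j : Fin (n+1) => a ((m+2) + i + j) := by
    ext i j; simp only [Matrix.submatrix_apply, Matrix.of_apply, sucEmb]; congr 1; omega
  have h4 : (Matrix.of fun i j : Fin (n+2) => a (m + i + j)).submatrix (cskEmb n) (sucEmb n)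
      = Matrix.of fun i j : Fin (n+1) => a ((m+1) + i + j) := by
    ext i j; simp only [Matrix.submatrix_apply, Matrix.of_apply, cskEmb, sucEmb]; congr 1; omega
  have h5 : (Matrix.of fun i j : Fin (n+2) => a (m + i + j)).submatrix (sucEmb n) (cskEmb n)
      = Matrix.of fun i j : Fin (n+1) => a ((m+1) + i + j) := by
    ext i j; simp only [Matrix.submatrix_apply, Matrix.of_apply, cskEmb, sucEmb]; congr 1; omega
  rw [h1, h2, h3, h4, h5] at key
  exact key
lemma hankel_caseB (a : ℕ → ℂ) (d N : ℕ)
    (h2 : ∀ k n : ℕ, d + 1 < k → N ≤ n → hankelDet a n k = 0)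
    (hB : ∀ n : ℕ, N ≤ n → hankelDet a n (d+1) ≠ 0) :
    ∃ c : ℕ → ℂ, c (d+1) = 1 ∧
      ∀ m : ℕ, N ≤ m → ∑ s ∈ Finset.range (d+2), c s * a (m + s) = 0 := by
  classical
  set W : Matrix (Fin (d+1)) (Fin (d+1)) ℂ := Matrix.of fun i j : Fin (d+1) => a (N + i + j)
    with hWdef
  have hW : IsUnit W.det := Ne.isUnit (hB N le_rfl)
  set v : Fin (d+1) → ℂ := fun i => a (N + (d+1) + i) with hv
  set c0 : Fin (d+1) → ℂ := W⁻¹.mulVec v with hc0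
  have hWc : W.mulVec c0 = v := by
    rw [hc0, Matrix.mulVec_mulVec, Matrix.mul_nonsing_inv _ hW, Matrix.one_mulVec]
  set ce : ℕ → ℂ := fun s => if h : s < d + 1 then c0 ⟨s, h⟩ else 0 with hce
  set b : ℕ → ℂ := fun j =>
    a (N + (d+1) + j) - ∑ s ∈ Finset.range (d+1), ce s * a (N + s + j) with hbdef
  have hbeq : ∀ j : ℕ, b j
      = a (N + (d+1) + j) - ∑ s ∈ Finset.range (d+1), ce s * a (N + s + j) := fun _ => rfl
  have hsum_fin : ∀ j : ℕ, ∑ s ∈ Finset.range (d+1), ce s * a (N + s + j)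
      = ∑ t : Fin (d+1), c0 t * a (N + t + j) := by
    intro j
    rw [← Fin.sum_univ_eq_sum_range (fun s => ce s * a (N + s + j)) (d+1)]
    apply Finset.sum_congr rfl
    intro t _
    congr 1
    simp [hce]
    exact fun h => absurd h (Nat.not_lt.mpr (Nat.le_of_lt_succ t.isLt))
  have hbsmall : ∀ j : ℕ, j < d + 1 → b j = 0 := by
    intro j hj
    have hrow := congrFun hWc ⟨j, hj⟩
    simp only [Matrix.mulVec, dotProduct] at hrow
    rw [hbeq j, hsum_fin j]
    have hv' : v ⟨j, hj⟩ = a (N + (d+1) + j) := rfl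
    rw [show (∑ t : Fin (d+1), c0 t * a (N + t + j)) = ∑ t : Fin (d+1), W ⟨j, hj⟩ t * c0 t by
      apply Finset.sum_congr rfl; intro t _
      show c0 t * a (N + t + j) = a (N + j + t) * c0 t
      rw [show N + (t:ℕ) + j = N + j + t by omega]; ring]
    rw [hrow, hv']
    ring
  have hbzero : ∀ j : ℕ, b j = 0 := by
    intro j
    induction j using Nat.strong_induction_on with
    | _ j ihj =>
      by_cases hj : j < d + 1
      · exact hbsmall j hj
      · push_neg at hj
        set p : ℕ := j - (d+1) with hpdef
        have hjp : j = p + (d+1) := by omega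
        set B : Matrix (Fin (d+2)) (Fin (d+2)) ℂ :=
          Matrix.of fun i l : Fin (d+2) => a (N + p + i + l) with hBdef
        have hdetB : B.det = 0 := h2 (d+2) (N+p) (by omega) (by omega)
        set w : Fin (d+2) → ℂ :=
          (1:ℂ) • B (Fin.last (d+1)) +
            ∑ k ∈ Finset.univ.map ⟨Fin.castSucc, Fin.castSucc_injective (d+1)⟩,
              (fun k : Fin (d+2) => -(ce (k:ℕ))) k • B k with hwdef
        have hdetU : (B.updateRow (Fin.last (d+1)) w).det = B.det := by
          rw [hwdef, Matrix.det_updateRow_sum_aux, one_smul]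
          simp only [Finset.mem_map, Finset.mem_univ, true_and, not_exists]
          intro k hk
          have := congrArg Fin.val hk
          simp [Fin.val_last] at this
          omega
        have hwval : ∀ l : Fin (d+2), w l = b (p + l) := by
          intro l
          have hwl : w l = B (Fin.last (d+1)) l
              + ∑ k : Fin (d+1), -(ce ((Fin.castSucc k : Fin (d+2)) : ℕ)) * B (Fin.castSucc k) l := by
            rw [hwdef]
            simp [Finset.sum_map, Finset.sum_apply, Pi.smul_apply, smul_eq_mul]
          rw [hwl, hbeq (p + l), ← Fin.sum_univ_eq_sum_range
            (fun s => ce s * a (N + s + (p + l))) (d+1)]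
          have h1 : B (Fin.last (d+1)) l = a (N + (d+1) + (p + ↑l)) := by
            show a (N + p + (Fin.last (d+1) : Fin (d+2)) + l) = _
            congr 1
            simp only [Fin.val_last]
            omega
          have h2' : ∀ k : Fin (d+1),
              -(ce ((Fin.castSucc k : Fin (d+2)) : ℕ)) * B (Fin.castSucc k) l
                = -(ce (k:ℕ) * a (N + (k:ℕ) + (p + ↑l))) := by
            intro k
            have hBk : B (Fin.castSucc k) l = a (N + (k:ℕ) + (p + ↑l)) := by
              show a (N + p + (Fin.castSucc k : Fin (d+2)) + l) = _
              congr 1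
              simp only [Fin.coe_castSucc]
              omega
            rw [hBk, Fin.coe_castSucc]
            ring
          rw [h1, Finset.sum_congr rfl (fun k _ => h2' k)]
          rw [Finset.sum_neg_distrib, ← sub_eq_add_neg]
        -- block structure of the updated matrix
        have hUsub : (B.updateRow (Fin.last (d+1)) w).submatrix
            (finSumFinEquiv : Fin (d+1) ⊕ Fin 1 ≃ Fin (d+2))
            (finSumFinEquiv : Fin (d+1) ⊕ Fin 1 ≃ Fin (d+2)) =
            Matrix.fromBlocks (Matrix.of fun i l : Fin (d+1) => a (N + p + i + l))
              (Matrix.of fun i (_ : Fin 1) => a (N + p + i + (d+1)))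
              0 (Matrix.of fun _ _ : Fin 1 => b j) := by
          have hrowne : ∀ i : Fin (d+1), (Fin.castAdd 1 i : Fin (d+2)) ≠ Fin.last (d+1) := by
            intro i hcon
            have := congrArg Fin.val hcon
            simp only [Fin.coe_castAdd, Fin.val_last] at this
            omega
          have hrowlast : ∀ i : Fin 1, (Fin.natAdd (d+1) i : Fin (d+2)) = Fin.last (d+1) := by
            intro i
            apply Fin.ext
            simp only [Fin.coe_natAdd, Fin.val_last]
            omega
          ext i l
          rcases i with i | i <;> rcases l with l | l <;>
            simp only [Matrix.submatrix_apply, finSumFinEquiv_apply_left,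
              finSumFinEquiv_apply_right, Matrix.fromBlocks, Sum.elim_inl, Sum.elim_inr,
              Matrix.of_apply, Matrix.zero_apply]
          · rw [Matrix.updateRow_ne (hrowne i)]
            show a (N + p + (Fin.castAdd 1 i : Fin (d+2)) + (Fin.castAdd 1 l : Fin (d+2))) = _
            first
            | rfl
            | (congr 1
               simp only [Fin.coe_castAdd, Fin.coe_natAdd, Fin.val_last]
               omega)
          · rw [Matrix.updateRow_ne (hrowne i)]
            show a (N + p + (Fin.castAdd 1 i : Fin (d+2)) + (Fin.natAdd (d+1) l : Fin (d+2))) = _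
            congr 1
            simp only [Fin.coe_castAdd, Fin.coe_natAdd]
            omega
          · rw [hrowlast i, Matrix.updateRow_self, hwval]
            have : ((Fin.castAdd 1 l : Fin (d+2)) : ℕ) = (l : ℕ) := rfl
            rw [this]
            exact ihj (p + l) (by omega)
          · rw [hrowlast i, Matrix.updateRow_self, hwval]
            have : ((Fin.natAdd (d+1) l : Fin (d+2)) : ℕ) = d + 1 := by
              simp only [Fin.coe_natAdd]; omega
            rw [this]
            congr 1
            omega
        have hkey : (Matrix.of fun i l : Fin (d+1) => a (N + p + i + l)).det * b j = 0 := by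
          have hdet := Matrix.det_submatrix_equiv_self
            (finSumFinEquiv : Fin (d+1) ⊕ Fin 1 ≃ Fin (d+2)) (B.updateRow (Fin.last (d+1)) w)
          rw [hUsub] at hdet
          rw [Matrix.det_fromBlocks_zero₂₁, Matrix.det_fin_one, Matrix.of_apply] at hdet
          rw [hdet, hdetU, hdetB]
        have hHne : (Matrix.of fun i l : Fin (d+1) => a (N + p + i + l)).det ≠ 0 :=
          hB (N + p) (by omega)
        exact (mul_eq_zero.mp hkey).resolve_left hHne
  refine ⟨fun s => if s = d + 1 then 1 else -(ce s), by simp, ?_⟩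
  intro m hm
  rw [Finset.sum_range_succ]
  have hbm := hbzero (m - N)
  rw [hbeq (m - N)] at hbm
  have e1 : a (N + (d+1) + (m - N)) = a (m + (d+1)) := by congr 1; omega
  have e2 : ∑ s ∈ Finset.range (d+1), ce s * a (N + s + (m - N))
      = ∑ s ∈ Finset.range (d+1), ce s * a (m + s) := by
    apply Finset.sum_congr rfl
    intro s _
    congr 2
    omega
  rw [e1, e2] at hbm
  have hiter : ∑ s ∈ Finset.range (d+1), (if s = d + 1 then (1:ℂ) else -(ce s)) * a (m + s)
      = -∑ s ∈ Finset.range (d+1), ce s * a (m + s) := by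
    rw [← Finset.sum_neg_distrib]
    apply Finset.sum_congr rfl
    intro s hs
    rw [Finset.mem_range] at hs
    rw [if_neg (by omega)]
    ring
  rw [hiter]
  have hlast : ((fun s => if s = d + 1 then (1:ℂ) else -ce s) (d + 1)) = 1 := by simp
  rw [hlast, one_mul]
  linear_combination hbm
lemma hankel_rec (a : ℕ → ℂ) : ∀ d N : ℕ,
    (∀ k n : ℕ, d < k → N ≤ n → hankelDet a n k = 0) →
    ∃ (M : ℕ) (c : ℕ → ℂ), c d = 1 ∧
      ∀ m : ℕ, M ≤ m → ∑ s ∈ Finset.range (d+1), c s * a (m + s) = 0 := by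
  intro d
  induction d with
  | zero =>
    intro N h
    refine ⟨N, fun _ => 1, rfl, ?_⟩
    intro m hm
    have h1 := h 1 m Nat.zero_lt_one hm
    rw [hankelDet, Matrix.det_fin_one] at h1
    simpa [Finset.sum_range_one] using h1
  | succ d ih =>
    intro N h
    by_cases hA : ∃ m, N ≤ m ∧ hankelDet a m (d+1) = 0
    · obtain ⟨m0, hm0N, hm0⟩ := hA
      have hprop : ∀ n, m0 ≤ n → hankelDet a n (d+1) = 0 := by
        intro n hn
        induction n, hn using Nat.le_induction with
        | base => exact hm0
        | succ n hn ihn =>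
          have hdj := dj_hankel a n d
          rw [ihn, h (d+2) n (by omega) (le_trans hm0N hn)] at hdj
          have hsq : hankelDet a (n+1) (d+1) * hankelDet a (n+1) (d+1) = 0 := by
            linear_combination hdj
          exact mul_self_eq_zero.mp hsq
      obtain ⟨M, c, hcd, hrec⟩ := ih m0 (fun k n hk hn => by
        rcases Nat.lt_or_ge (d+1) k with hk2 | hk2
        · exact h k n hk2 (le_trans hm0N hn)
        · have hkk : k = d + 1 := by omega
          subst hkk
          exact hprop n hn)
      refine ⟨M, fun s => if s = 0 then 0 else c (s - 1), by simp [hcd], ?_⟩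
      intro m hm
      rw [Finset.sum_range_succ']
      have hstep : ∑ i ∈ Finset.range (d+1),
          (if i + 1 = 0 then (0:ℂ) else c (i + 1 - 1)) * a (m + (i+1))
          = ∑ i ∈ Finset.range (d+1), c i * a ((m+1) + i) := by
        apply Finset.sum_congr rfl
        intro i _
        rw [if_neg (Nat.succ_ne_zero i), Nat.add_sub_cancel]
        congr 2
        omega
      have hM1 : M ≤ m + 1 := by omega
      rw [hstep, hrec (m+1) hM1]
      simp
    · push_neg at hA
      obtain ⟨c, hcd, hrec⟩ := hankel_caseB a d N h hA
      exact ⟨N, c, hcd, hrec⟩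
lemma factor_poly : ∀ (d : ℕ) (P : Polynomial ℂ), P.natDegree ≤ d → P.coeff 0 = 1 →
    ∃ lam : Fin d → ℂ, P = ∏ i, (1 - Polynomial.C (lam i) * Polynomial.X) := by
  intro d
  induction d with
  | zero =>
    intro P hdeg h0
    refine ⟨fun _ => 0, ?_⟩
    rw [Polynomial.eq_C_of_natDegree_le_zero hdeg, h0]
    simp
  | succ d ih =>
    intro P hdeg h0
    by_cases hd : P.natDegree = 0
    · refine ⟨fun _ => 0, ?_⟩
      rw [Polynomial.eq_C_of_natDegree_le_zero (le_of_eq hd), h0]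
      simp
    · have hPne : P ≠ 0 := fun hP => by simp [hP] at h0
      have hdegpos : 0 < P.degree := by
        rw [← Polynomial.natDegree_pos_iff_degree_pos]
        omega
      obtain ⟨r, hr⟩ := Complex.exists_root hdegpos
      have hrne : r ≠ 0 := by
        intro h0r
        subst h0r
        rw [Polynomial.IsRoot.def, ← Polynomial.coeff_zero_eq_eval_zero, h0] at hr
        exact one_ne_zero hr
      obtain ⟨Q, hQ⟩ := Polynomial.dvd_iff_isRoot.mpr hr
      have hCC : Polynomial.C r⁻¹ * Polynomial.C r = 1 := by
        rw [← Polynomial.C_mul, inv_mul_cancel₀ hrne, Polynomial.C_1]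
      set P2 : Polynomial ℂ := -Polynomial.C r * Q with hP2
      have hfac : P = (1 - Polynomial.C r⁻¹ * Polynomial.X) * P2 := by
        rw [hP2]
        linear_combination hQ - Q * Polynomial.X * hCC
      have h20 : P2.coeff 0 = 1 := by
        have h1 := congrArg (Polynomial.eval 0) hfac
        simp only [Polynomial.eval_mul, Polynomial.eval_sub, Polynomial.eval_one,
          Polynomial.eval_C, Polynomial.eval_X, mul_zero, sub_zero, one_mul] at h1
        rw [Polynomial.coeff_zero_eq_eval_zero, ← h1, ← Polynomial.coeff_zero_eq_eval_zero, h0]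
      have h2ne : P2 ≠ 0 := fun hc => by simp [hc] at h20
      have hf1 : (1 : Polynomial ℂ) - Polynomial.C r⁻¹ * Polynomial.X
          = Polynomial.C (-r⁻¹) * Polynomial.X + Polynomial.C 1 := by
        rw [Polynomial.C_neg, Polynomial.C_1]
        ring
      have hf1deg : ((1 : Polynomial ℂ) - Polynomial.C r⁻¹ * Polynomial.X).natDegree = 1 := by
        rw [hf1]
        exact Polynomial.natDegree_linear (neg_ne_zero.mpr (inv_ne_zero hrne))
      have hf1ne : (1 : Polynomial ℂ) - Polynomial.C r⁻¹ * Polynomial.X ≠ 0 := by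
        intro hc
        rw [hc] at hf1deg
        simp at hf1deg
      have hdP : P.natDegree = 1 + P2.natDegree := by
        rw [hfac, Polynomial.natDegree_mul hf1ne h2ne, hf1deg]
      obtain ⟨lam', hlam'⟩ := ih P2 (by omega) h20
      refine ⟨Fin.cons r⁻¹ lam', ?_⟩
      rw [Fin.prod_univ_succ]
      simp only [Fin.cons_zero, Fin.cons_succ]
      rw [← hlam', hfac]

lemma coe_prod_lin (d : ℕ) (lam : Fin d → ℂ) :
    ((∏ i, (1 - Polynomial.C (lam i) * Polynomial.X) : Polynomial ℂ) : PowerSeries ℂ)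
      = ∏ i, (1 - PowerSeries.C (lam i) * PowerSeries.X) := by
  rw [← Polynomial.coeToPowerSeries.ringHom_apply, map_prod]
  apply Finset.prod_congr rfl
  intro i _
  rw [RingHom.map_sub, RingHom.map_mul, RingHom.map_one]
  rw [Polynomial.coeToPowerSeries.ringHom_apply, Polynomial.coeToPowerSeries.ringHom_apply,
    Polynomial.coe_C, Polynomial.coe_X]

lemma coeff_mul_poly (a : ℕ → ℂ) (Q : Polynomial ℂ) (d : ℕ) (hQ : Q.natDegree ≤ d)
    (m : ℕ) (hm : d ≤ m) :
    PowerSeries.coeff m (PowerSeries.mk a * (↑Q : PowerSeries ℂ))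
      = ∑ s ∈ Finset.range (d+1), Q.coeff s * a (m - s) := by
  rw [PowerSeries.coeff_mul, Finset.Nat.sum_antidiagonal_eq_sum_range_succ_mk]
  have h1 : ∀ k ∈ Finset.range (m+1),
      (PowerSeries.coeff k) (PowerSeries.mk a) * (PowerSeries.coeff (m - k)) (↑Q : PowerSeries ℂ)
        = (fun s => Q.coeff s * a (m - s)) (m - k) := by
    intro k hk
    rw [Finset.mem_range] at hk
    rw [PowerSeries.coeff_mk, Polynomial.coeff_coe]
    show a k * Q.coeff (m - k) = Q.coeff (m - k) * a (m - (m - k))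
    rw [show m - (m - k) = k by omega]
    ring
  rw [Finset.sum_congr rfl h1]
  have h2 : ∀ k ∈ Finset.range (m+1), (fun s => Q.coeff s * a (m - s)) (m - k)
      = (fun s => Q.coeff s * a (m - s)) (m + 1 - 1 - k) := by
    intro k _
    rw [show m - k = m + 1 - 1 - k by omega]
  rw [Finset.sum_congr rfl h2,
    Finset.sum_range_reflect (fun s => Q.coeff s * a (m - s)) (m+1)]
  symm
  apply Finset.sum_subset
  · intro x hx
    rw [Finset.mem_range] at hx ⊢
    omega
  · intro x _ hx
    rw [Finset.mem_range] at hx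
    rw [Polynomial.coeff_eq_zero_of_natDegree_lt (by omega)]
    ring
lemma ps_eq_coe_trunc (f : PowerSeries ℂ) (M : ℕ)
    (h : ∀ m : ℕ, M ≤ m → PowerSeries.coeff m f = 0) :
    f = ((PowerSeries.trunc M f : Polynomial ℂ) : PowerSeries ℂ) := by
  ext n
  rw [Polynomial.coeff_coe, PowerSeries.coeff_trunc]
  by_cases hn : n < M
  · rw [if_pos hn]
  · rw [if_neg hn]
    exact h n (by omega)

lemma hankel_forward (d : ℕ) (a : ℕ → ℂ) (R : Polynomial ℂ) (lam : Fin d → ℂ)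
    (hR : PowerSeries.mk a * ∏ i, (1 - PowerSeries.C (lam i) * PowerSeries.X)
      = (R : PowerSeries ℂ)) :
    ∀ k n : ℕ, d < k → R.natDegree + 1 ≤ n → hankelDet a n k = 0 := by
  classical
  intro k n hk hn
  set Q : Polynomial ℂ := ∏ i, (1 - Polynomial.C (lam i) * Polynomial.X) with hQdef
  have hQc : PowerSeries.mk a * (↑Q : PowerSeries ℂ) = ↑R := by
    rw [hQdef, coe_prod_lin]
    exact hR
  have hQdeg : Q.natDegree ≤ d := by
    refine le_trans (Polynomial.natDegree_prod_le _ _) (le_trans (Finset.sum_le_sum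
      (fun (i : Fin d) _ => ?_)) (le_of_eq (by simp : (∑ _i : Fin d, 1) = d)))
    refine le_trans (Polynomial.natDegree_sub_le _ _) ?_
    simp only [Polynomial.natDegree_one, max_le_iff]
    refine ⟨by omega, le_trans Polynomial.natDegree_mul_le (by simp)⟩
  have hQ0 : Q.coeff 0 = 1 := by
    rw [Polynomial.coeff_zero_eq_eval_zero, hQdef, Polynomial.eval_prod]
    simp
  rw [hankelDet]
  apply Matrix.exists_mulVec_eq_zero_iff.mp
  refine ⟨fun j : Fin k => if (j:ℕ) ≤ d then Q.coeff (d - j) else 0, ?_, ?_⟩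
  · intro hc
    have hd := congrFun hc ⟨d, hk⟩
    simp only [Pi.zero_apply] at hd
    rw [if_pos (le_refl d)] at hd
    rw [show d - ((⟨d, hk⟩ : Fin k) : ℕ) = 0 from by simp, hQ0] at hd
    exact one_ne_zero hd
  · funext i
    simp only [Matrix.mulVec, dotProduct, Matrix.of_apply, Pi.zero_apply]
    rw [Fin.sum_univ_eq_sum_range
      (fun t => a (n + i + t) * (if t ≤ d then Q.coeff (d - t) else 0)) k]
    rw [← Finset.sum_subset (Finset.range_subset_range.mpr (by omega : d + 1 ≤ k))
      (fun x _ hx => by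
        rw [Finset.mem_range, not_lt] at hx
        rw [if_neg (by omega), mul_zero])]
    have hcong : ∀ t ∈ Finset.range (d+1),
        a (n + i + t) * (if t ≤ d then Q.coeff (d - t) else 0)
          = (fun s => Q.coeff s * a ((n + i + d) - s)) (d + 1 - 1 - t) := by
      intro t ht
      rw [Finset.mem_range] at ht
      rw [if_pos (by omega)]
      show a (n + i + t) * Q.coeff (d - t) = Q.coeff (d + 1 - 1 - t) * a ((n + i + d) - (d + 1 - 1 - t))
      rw [show d + 1 - 1 - t = d - t by omega, show (n + i + d) - (d - t) = n + i + t by omega]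
      ring
    rw [Finset.sum_congr rfl hcong,
      Finset.sum_range_reflect (fun s => Q.coeff s * a ((n + i + d) - s)) (d+1),
      ← coeff_mul_poly a Q d hQdeg (n + i + d) (by omega), hQc, Polynomial.coeff_coe,
      Polynomial.coeff_eq_zero_of_natDegree_lt (by omega)]

end

/-- `Σ aₙ tⁿ` is rational with denominator `∏ (1 - λᵢ t)` for some `λ₁,…,λ_d`
iff the Hankel determinants `H_{n,k}(a)` vanish for all `k > d` and all sufficiently large `n`. -/
theorem hankel_vanishing_iff_rational (d : ℕ) (a : ℕ → ℂ) :
    (∃ (R : Polynomial ℂ) (lam : Fin d → ℂ),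
        PowerSeries.mk a * ∏ i, (1 - PowerSeries.C (lam i) * PowerSeries.X)
          = (R : PowerSeries ℂ)) ↔
    (∃ N : ℕ, ∀ k n : ℕ, d < k → N ≤ n → hankelDet a n k = 0) := by
  classical
  constructor
  · rintro ⟨R, lam, hR⟩
    exact ⟨R.natDegree + 1, hankel_forward d a R lam hR⟩
  · rintro ⟨N, h⟩
    obtain ⟨M, c, hcd, hrec⟩ := hankel_rec a d N h
    set P : Polynomial ℂ := ∑ s ∈ Finset.range (d+1), Polynomial.C (c (d - s)) * Polynomial.X ^ s
      with hPdef
    have hPcoeff : ∀ s : ℕ, P.coeff s = if s ≤ d then c (d - s) else 0 := by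
      intro s
      rw [hPdef, Polynomial.finset_sum_coeff]
      have hterm : ∀ t ∈ Finset.range (d+1),
          (Polynomial.C (c (d - t)) * Polynomial.X ^ t).coeff s
            = if t = s then c (d - t) else 0 := by
        intro t _
        rw [Polynomial.coeff_C_mul, Polynomial.coeff_X_pow]
        by_cases hts : t = s
        · subst hts; simp
        · rw [if_neg (fun hc => hts hc.symm), if_neg hts, mul_zero]
      rw [Finset.sum_congr rfl hterm, Finset.sum_ite_eq' (Finset.range (d+1)) s
        (fun t => c (d - t))]
      simp [Nat.lt_succ_iff]
    have hP0 : P.coeff 0 = 1 := by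
      rw [hPcoeff]
      simp [hcd]
    have hPdeg : P.natDegree ≤ d := by
      rw [hPdef]
      apply Polynomial.natDegree_sum_le_of_forall_le
      intro s hs
      rw [Finset.mem_range] at hs
      refine le_trans Polynomial.natDegree_mul_le ?_
      rw [Polynomial.natDegree_C, Polynomial.natDegree_X_pow]
      omega
    have hvan : ∀ m : ℕ, M + d ≤ m → PowerSeries.coeff m (PowerSeries.mk a * (↑P : PowerSeries ℂ)) = 0 := by
      intro m hm
      rw [coeff_mul_poly a P d hPdeg m (by omega)]
      have hcong : ∀ s ∈ Finset.range (d+1), P.coeff s * a (m - s)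
          = (fun u => c u * a ((m - d) + u)) (d + 1 - 1 - s) := by
        intro s hs
        rw [Finset.mem_range] at hs
        rw [hPcoeff s, if_pos (by omega)]
        show c (d - s) * a (m - s) = c (d + 1 - 1 - s) * a ((m - d) + (d + 1 - 1 - s))
        rw [show d + 1 - 1 - s = d - s by omega, show (m - d) + (d - s) = m - s by omega]
      rw [Finset.sum_congr rfl hcong,
        Finset.sum_range_reflect (fun u => c u * a ((m - d) + u)) (d+1)]
      exact hrec (m - d) (by omega)
    obtain ⟨lam, hlam⟩ := factor_poly d P hPdeg hP0
    refine ⟨PowerSeries.trunc (M + d) (PowerSeries.mk a * (↑P : PowerSeries ℂ)), lam, ?_⟩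
    rw [← coe_prod_lin, ← hlam]
    exact ps_eq_coe_trunc _ _ hvan
end

section
/- Suppose a = (a_n)_{n≥0} and b = (b_n)_{n≥0} are linearly recurrent sequences of integers such that |a_n − b_n| is bounded. Then the difference sequence (a_n − b_n) is eventually periodic: there exist N ≥ 0 and p ≥ 1 such that a_{n+p} − b_{n+p} = a_n − b_n for all n ≥ N. -/
open Filter Polynomial

/-- `f` is the (monic) characteristic polynomial of a linear recurrence satisfied by `a`. -/
def IsCharPolyOf (a : ℕ → ℂ) (f : Polynomial ℂ) : Prop :=
  f.Monic ∧ 1 ≤ f.natDegree ∧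
    ∀ n : ℕ, ∑ i ∈ Finset.range (f.natDegree + 1), f.coeff i * a (n + i) = 0

noncomputable def Lop (P : Polynomial ℂ) (a : ℕ → ℂ) (n : ℕ) : ℂ :=
  P.sum fun i c => c * a (n + i)

lemma Lop_add (P Q : Polynomial ℂ) (a : ℕ → ℂ) (n : ℕ) :
    Lop (P + Q) a n = Lop P a n + Lop Q a n := by
  unfold Lop
  apply Polynomial.sum_add_index <;> intros <;> ring

lemma Lop_monomial (k : ℕ) (c : ℂ) (a : ℕ → ℂ) (n : ℕ) :
    Lop (Polynomial.monomial k c) a n = c * a (n + k) := by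
  unfold Lop
  rw [Polynomial.sum_monomial_index]
  ring

lemma Lop_mul (P Q : Polynomial ℂ) (a : ℕ → ℂ) (n : ℕ) :
    Lop (P * Q) a n = Lop P (Lop Q a) n := by
  induction P using Polynomial.induction_on' generalizing n with
  | add p q hp hq => simp [add_mul, Lop_add, hp, hq]
  | monomial k c =>
    rw [Lop_monomial]
    induction Q using Polynomial.induction_on' generalizing n with
    | add p q hp hq => rw [mul_add, Lop_add, hp, hq, Lop_add]; ring
    | monomial j d =>
      rw [Polynomial.monomial_mul_monomial, Lop_monomial, Lop_monomial]
      ring_nf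

lemma Lop_sub (P : Polynomial ℂ) (a b : ℕ → ℂ) (n : ℕ) :
    Lop P (fun m => a m - b m) n = Lop P a n - Lop P b n := by
  unfold Lop Polynomial.sum
  rw [← Finset.sum_sub_distrib]
  exact Finset.sum_congr rfl fun i _ => by ring

lemma Lop_zero_fun (P : Polynomial ℂ) (x : ℕ → ℂ) (hx : ∀ m, x m = 0) (n : ℕ) :
    Lop P x n = 0 := by
  unfold Lop Polynomial.sum
  simp [hx]

lemma Lop_eq_sum_range (P : Polynomial ℂ) (a : ℕ → ℂ) (n N : ℕ) (hN : P.natDegree < N) :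
    Lop P a n = ∑ i ∈ Finset.range N, P.coeff i * a (n + i) := by
  unfold Lop
  exact Polynomial.sum_over_range' P (fun i => zero_mul (a (n + i))) N hN


lemma main_aux (a b : ℕ → ℤ) (c : ℕ → ℂ) (hc : c = fun n => ((a n : ℂ) - (b n : ℂ)))
    (h : Polynomial ℂ) (D : ℕ) (hD1 : 1 ≤ D)
    (hrec : ∀ n, c (n + D) = -∑ i ∈ Finset.range D, h.coeff i * c (n + i))
    (m m' : ℕ) (hlt : m < m')
    (hmm : ∀ i < D, a (m + i) - b (m + i) = a (m' + i) - b (m' + i)) :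
    ∃ N p : ℕ, 1 ≤ p ∧ ∀ n : ℕ, N ≤ n → a (n + p) - b (n + p) = a n - b n := by
  set p := m' - m with hp
  have hp1 : 1 ≤ p := by omega
  refine ⟨m, p, hp1, ?_⟩
  have key : ∀ n, m ≤ n → c (n + p) = c n := by
    intro n
    induction n using Nat.strong_induction_on with
    | _ n ih =>
      intro hmn
      by_cases hcase : n < m + D
      · have hi : n - m < D := by omega
        have := hmm (n - m) hi
        have hn : m + (n - m) = n := by omega
        have hn' : m' + (n - m) = n + p := by omega
        rw [hn, hn'] at this
        simp only [hc]
        exact_mod_cast this.symm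
      · have hk : m ≤ n - D := by omega
        have hnd : n - D + D = n := by omega
        have hnd' : n - D + p + D = n + p := by omega
        have e1 : c (n + p) = -∑ i ∈ Finset.range D, h.coeff i * c (n - D + p + i) := by
          have := hrec (n - D + p); rwa [hnd'] at this
        have e2 : c n = -∑ i ∈ Finset.range D, h.coeff i * c (n - D + i) := by
          have := hrec (n - D); rwa [hnd] at this
        rw [e1, e2]
        congr 1
        apply Finset.sum_congr rfl
        intro i hi
        have hi' : i < D := Finset.mem_range.mp hi
        have e3 : n - D + p + i = (n - D + i) + p := by omega
        rw [e3, ih (n - D + i) (by omega) (by omega)]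
  intro n hn
  have := key n hn
  simp only [hc] at this
  exact_mod_cast this

/-- Remark 2.4: if `a` and `b` are linearly recurrent integer sequences with
`|aₙ - bₙ|` bounded, then the difference `aₙ - bₙ` is eventually periodic. -/
theorem difference_eventually_periodic (a b : ℕ → ℤ)
    (ha : ∃ f : Polynomial ℂ, IsCharPolyOf (fun n => (a n : ℂ)) f)
    (hb : ∃ f : Polynomial ℂ, IsCharPolyOf (fun n => (b n : ℂ)) f)
    (hbd : ∃ C : ℤ, ∀ n : ℕ, |a n - b n| ≤ C) :
    ∃ N p : ℕ, 1 ≤ p ∧ ∀ n : ℕ, N ≤ n → a (n + p) - b (n + p) = a n - b n := by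
  obtain ⟨f, hfm, hfd, hfr⟩ := ha
  obtain ⟨g, hgm, hgd, hgr⟩ := hb
  obtain ⟨C, hC⟩ := hbd
  -- the complex difference sequence
  set c : ℕ → ℂ := fun n => ((a n : ℂ) - (b n : ℂ)) with hc
  have hf0 : f ≠ 0 := hfm.ne_zero
  have hg0 : g ≠ 0 := hgm.ne_zero
  set h : Polynomial ℂ := f * g with hh
  have hhm : h.Monic := hfm.mul hgm
  set D : ℕ := h.natDegree with hD
  have hDfg : D = f.natDegree + g.natDegree := Polynomial.natDegree_mul hf0 hg0
  have hD1 : 1 ≤ D := by omega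
  -- Lop f a = 0 pointwise
  have hla : ∀ n, Lop f (fun n => (a n : ℂ)) n = 0 := by
    intro n
    rw [Lop_eq_sum_range _ _ _ _ (Nat.lt_succ_self _)]
    exact hfr n
  have hlb : ∀ n, Lop g (fun n => (b n : ℂ)) n = 0 := by
    intro n
    rw [Lop_eq_sum_range _ _ _ _ (Nat.lt_succ_self _)]
    exact hgr n
  have hlc : ∀ n, Lop h c n = 0 := by
    intro n
    rw [hc, Lop_sub]
    have h1 : Lop h (fun n => (a n : ℂ)) n = 0 := by
      rw [hh, mul_comm, Lop_mul]
      exact Lop_zero_fun _ _ hla n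
    have h2 : Lop h (fun n => (b n : ℂ)) n = 0 := by
      rw [hh, Lop_mul]
      exact Lop_zero_fun _ _ hlb n
    rw [h1, h2, sub_zero]
  -- the recurrence for c: c (n + D) = -∑ i ∈ range D, h.coeff i * c (n + i)
  have hrec : ∀ n, c (n + D) = -∑ i ∈ Finset.range D, h.coeff i * c (n + i) := by
    intro n
    have := hlc n
    rw [Lop_eq_sum_range _ _ _ (D + 1) (Nat.lt_succ_self _), Finset.sum_range_succ] at this
    have hlead : h.coeff D = 1 := hhm.coeff_natDegree
    rw [hlead, one_mul] at this
    linear_combination this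
  -- pigeonhole on integer tuples
  have hC0 : 0 ≤ C := le_trans (abs_nonneg _) (hC 0)
  set T : ℕ → (Fin D → Finset.Icc (-C) C) := fun n i =>
    ⟨a (n + i) - b (n + i), by
      rw [Finset.mem_Icc, ← abs_le]
      exact hC _⟩ with hT
  obtain ⟨m, m', hne, heq⟩ := Finite.exists_ne_map_eq_of_infinite T
  -- wlog m < m'
  rcases hne.lt_or_gt with hlt | hlt
  case _ =>
    exact main_aux a b c hc h D hD1 hrec m m' hlt (fun i hi => by
      have := congrFun heq ⟨i, hi⟩
      simpa [hT] using congrArg Subtype.val this)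
  case _ =>
    exact main_aux a b c hc h D hD1 hrec m' m hlt (fun i hi => by
      have := congrFun heq.symm ⟨i, hi⟩
      simpa [hT] using congrArg Subtype.val this)
end

section
/- Let F be the free group of rank two with free generators x and y, and let φ: F → F be the endomorphism with φ(x) = x³ and φ(y) = y². Set z = xy, so that {z, y} is also a free generating set of F. Then for every n ≥ 1, φ^n(z) = (z y^{−1})^{3^n − 1} z y^{2^n − 1}, and the word length of φ^n(z) with respect to the generating set {z, y} (i.e., the least length of a word in z^{±1}, y^{±1} representing it) equals 2·3^n + 2^n − 2. -/
/-- The word length of `g` with respect to a finite set `S` of group elements: `n` is the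
least length of a word in elements of `S` and their inverses whose product is `g`. -/
def IsWordLength {G : Type*} [Group G] (S : Set G) (g : G) (n : ℕ) : Prop :=
  IsLeast {m : ℕ | ∃ w : List G, w.length = m ∧ (∀ u ∈ w, u ∈ S ∨ u⁻¹ ∈ S) ∧ w.prod = g} n

section Aux

open FreeGroup

/-- A word with no cancellable adjacent pair is its own reduction. -/
lemma aux_reduce_eq_self {α : Type*} [DecidableEq α] :
    ∀ L : List (α × Bool), List.Chain' (fun a b => ¬(a.1 = b.1 ∧ a.2 = !b.2)) L →
      FreeGroup.reduce L = L
  | [], _ => rfl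
  | [x], _ => rfl
  | x :: y :: L, h => by
      have h2 : ¬(x.1 = y.1 ∧ x.2 = !y.2) := (List.isChain_cons_cons.mp h).1
      rw [FreeGroup.reduce.cons, aux_reduce_eq_self (y :: L) (List.isChain_cons_cons.mp h).2]
      simp [h2]

lemma aux_norm_mk {α : Type*} [DecidableEq α] (L : List (α × Bool))
    (h : List.Chain' (fun a b => ¬(a.1 = b.1 ∧ a.2 = !b.2)) L) :
    FreeGroup.norm (FreeGroup.mk L) = L.length := by
  rw [FreeGroup.norm, FreeGroup.toWord_mk, aux_reduce_eq_self L h]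

lemma aux_prod_join_replicate {G : Type*} [Group G] (l : List G) :
    ∀ K : ℕ, ((List.replicate K l).flatten).prod = l.prod ^ K
  | 0 => by simp
  | K + 1 => by
      rw [List.replicate_succ, List.flatten_cons, List.prod_append,
        aux_prod_join_replicate l K, pow_succ']

lemma aux_norm_prod_le {α : Type*} [DecidableEq α] :
    ∀ w : List (FreeGroup α), (∀ u ∈ w, FreeGroup.norm u ≤ 1) →
      FreeGroup.norm w.prod ≤ w.length
  | [], _ => by simp
  | u :: w, h => by
      rw [List.prod_cons, List.length_cons]
      calc FreeGroup.norm (u * w.prod) ≤ FreeGroup.norm u + FreeGroup.norm w.prod :=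
            FreeGroup.norm_mul_le _ _
        _ ≤ 1 + w.length := by
            have := aux_norm_prod_le w (fun v hv => h v (List.mem_cons_of_mem _ hv))
            have := h u (List.mem_cons_self ..)
            omega
        _ = w.length + 1 := by omega

/-- The explicit reduced word for `(ab⁻¹)^K a b^M`. -/
def auxL (K M : ℕ) : List (Fin 2 × Bool) :=
  (List.replicate K [((0 : Fin 2), true), ((1 : Fin 2), false)]).flatten ++
    ((0 : Fin 2), true) :: List.replicate M ((1 : Fin 2), true)

lemma aux_bpow (M : ℕ) : (FreeGroup.of (1 : Fin 2)) ^ M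
    = FreeGroup.mk (List.replicate M ((1 : Fin 2), true)) := by
  conv_lhs => rw [← FreeGroup.mk_toWord (x := FreeGroup.of (1 : Fin 2) ^ M)]
  rw [FreeGroup.toWord_of_pow]

lemma aux_E_eq_mk (M : ℕ) : ∀ K : ℕ,
    (FreeGroup.of (0 : Fin 2) * (FreeGroup.of (1 : Fin 2))⁻¹) ^ K *
      (FreeGroup.of (0 : Fin 2) * FreeGroup.of (1 : Fin 2) ^ M) = FreeGroup.mk (auxL K M)
  | 0 => by
      rw [pow_zero, one_mul, aux_bpow, FreeGroup.of, FreeGroup.mul_mk]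
      simp [auxL]
  | K + 1 => by
      have hab : FreeGroup.of (0 : Fin 2) * (FreeGroup.of (1 : Fin 2))⁻¹
          = FreeGroup.mk [((0 : Fin 2), true), ((1 : Fin 2), false)] := by
        rw [FreeGroup.of, FreeGroup.of, FreeGroup.inv_mk, FreeGroup.mul_mk]
        simp [FreeGroup.invRev]
      rw [pow_succ', mul_assoc, aux_E_eq_mk M K, hab, FreeGroup.mul_mk]
      simp [auxL, List.replicate_succ]

lemma aux_chain (M : ℕ) : ∀ K : ℕ,
    List.Chain' (fun a b : Fin 2 × Bool => ¬(a.1 = b.1 ∧ a.2 = !b.2)) (auxL K M) ∧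
      (auxL K M).head? = some ((0 : Fin 2), true)
  | 0 => by
      refine ⟨?_, rfl⟩
      simp only [auxL, List.replicate_zero, List.flatten_nil, List.nil_append]
      refine List.IsChain.cons (List.isChain_replicate_of_rel _ (by decide)) ?_
      intro y hy
      cases M with
      | zero => simp at hy
      | succ M => simp [List.replicate_succ] at hy; subst hy; decide
  | K + 1 => by
      obtain ⟨hc, hh⟩ := aux_chain M K
      have hform : auxL (K + 1) M
          = ((0 : Fin 2), true) :: ((1 : Fin 2), false) :: auxL K M := by
        simp [auxL, List.replicate_succ]
      rw [hform]
      refine ⟨?_, rfl⟩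
      refine List.isChain_cons_cons.mpr ⟨by decide, ?_⟩
      refine List.IsChain.cons hc ?_
      intro y hy
      rw [hh] at hy
      simp at hy; subst hy; decide

lemma aux_len (K M : ℕ) : (auxL K M).length = 2 * K + 1 + M := by
  simp [auxL, List.length_flatten, List.map_replicate]
  omega

lemma aux_norm_E (K M : ℕ) :
    FreeGroup.norm ((FreeGroup.of (0 : Fin 2) * (FreeGroup.of (1 : Fin 2))⁻¹) ^ K *
      (FreeGroup.of (0 : Fin 2) * FreeGroup.of (1 : Fin 2) ^ M)) = 2 * K + 1 + M := by
  rw [aux_E_eq_mk, aux_norm_mk _ (aux_chain M K).1, aux_len]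

end Aux

/-- Example 5.2: for the endomorphism `φ` of the free group on `x, y` with
`φ(x) = x³`, `φ(y) = y²`, and `z = x * y`, one has
`φⁿ(z) = (z y⁻¹)^(3ⁿ - 1) z y^(2ⁿ - 1)` and the word length of `φⁿ(z)` with respect to the
generating set `{z, y}` is `2·3ⁿ + 2ⁿ - 2`. -/
theorem iterate_word_length_example
    (φ : FreeGroup (Fin 2) →* FreeGroup (Fin 2))
    (x y z : FreeGroup (Fin 2)) (hx : x = FreeGroup.of 0) (hy : y = FreeGroup.of 1)
    (hφx : φ x = x ^ 3) (hφy : φ y = y ^ 2) (hz : z = x * y) :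
    ∀ n : ℕ, 1 ≤ n →
      (⇑φ)^[n] z = (z * y⁻¹) ^ (3 ^ n - 1) * z * y ^ (2 ^ n - 1) ∧
      IsWordLength {z, y} ((⇑φ)^[n] z) (2 * 3 ^ n + 2 ^ n - 2) := by
  subst hz hx hy
  set a := FreeGroup.of (0 : Fin 2) with ha
  set b := FreeGroup.of (1 : Fin 2) with hb
  -- iterate formula
  have claim1 : ∀ n : ℕ, (⇑φ)^[n] (a * b) = a ^ 3 ^ n * b ^ 2 ^ n := by
    intro n
    induction n with
    | zero => simp
    | succ n ih =>
        rw [Function.iterate_succ_apply', ih, map_mul, map_pow, map_pow, hφx, hφy,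
          ← pow_mul, ← pow_mul, pow_succ, pow_succ]
        ring_nf
  intro n hn
  obtain ⟨K, hK⟩ : ∃ K, 3 ^ n = K + 1 :=
    ⟨3 ^ n - 1, by have := Nat.one_le_pow n 3 (by norm_num); omega⟩
  obtain ⟨M, hM⟩ : ∃ M, 2 ^ n = M + 1 :=
    ⟨2 ^ n - 1, by have := Nat.one_le_pow n 2 (by norm_num); omega⟩
  have hzy : a * b * b⁻¹ = a := by group
  have claim2 : (⇑φ)^[n] (a * b) = (a * b * b⁻¹) ^ (3 ^ n - 1) * (a * b) * b ^ (2 ^ n - 1) := by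
    rw [claim1, hzy, hK, hM]
    simp only [Nat.add_sub_cancel]
    rw [pow_succ, pow_succ']
    group
  refine ⟨claim2, ?_, ?_⟩
  · -- membership: an explicit word of the right length
    refine ⟨(List.replicate K [a * b, b⁻¹]).flatten ++ (a * b) :: List.replicate M b, ?_, ?_, ?_⟩
    · simp [List.length_flatten, List.map_replicate]
      omega
    · intro u hu
      simp only [List.mem_append, List.mem_flatten, List.mem_replicate, List.mem_cons] at hu
      rcases hu with ⟨l, ⟨-, rfl⟩, hu⟩ | hu | hu
      · simp only [List.mem_cons, List.not_mem_nil, or_false] at hu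
        rcases hu with rfl | rfl
        · exact Or.inl (Set.mem_insert _ _)
        · right; simp
      · subst hu; exact Or.inl (Set.mem_insert _ _)
      · obtain ⟨-, rfl⟩ := hu; left; simp
    · rw [List.prod_append, aux_prod_join_replicate, claim2, hzy, hK, hM]
      simp [mul_assoc]
  · -- lower bound via the automorphism sending z ↦ a, y ↦ b and the free group norm
    rintro m ⟨w, rfl, hmem, hprod⟩
    set χ : FreeGroup (Fin 2) →* FreeGroup (Fin 2) :=
      FreeGroup.lift (fun i : Fin 2 => if i = 0 then a * b⁻¹ else b) with hχ
    have hχa : χ a = a * b⁻¹ := by simp [hχ, ha]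
    have hχb : χ b = b := by simp [hχ, hb]
    have hχz : χ (a * b) = a := by rw [map_mul, hχa, hχb]; group
    have hmemχ : ∀ u ∈ w, FreeGroup.norm (χ u) ≤ 1 := by
      intro u hu
      rcases hmem u hu with h | h
      · rcases h with rfl | rfl
        · rw [hχz]; exact le_of_eq (FreeGroup.norm_of _)
        · rw [hχb]; exact le_of_eq (FreeGroup.norm_of _)
      · rcases h with h | h
        · have : χ u = a⁻¹ := by
            have : χ (u⁻¹) = a := by rw [h]; exact hχz
            rw [← this, map_inv, inv_inv]
          rw [this, FreeGroup.norm_inv_eq]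
          exact le_of_eq (FreeGroup.norm_of _)
        · have hu1 : u = b⁻¹ := by
            rw [Set.mem_singleton_iff] at h
            rw [← h]; simp
          rw [hu1, map_inv, hχb, FreeGroup.norm_inv_eq]
          exact le_of_eq (FreeGroup.norm_of _)
    have hnorm_le : FreeGroup.norm (χ w.prod) ≤ w.length := by
      rw [map_list_prod]
      have := aux_norm_prod_le (w.map χ) (by
        intro v hv
        rcases List.mem_map.mp hv with ⟨u, hu, rfl⟩
        exact hmemχ u hu)
      simpa using this
    have hχimg : χ w.prod = (a * b⁻¹) ^ K * (a * b ^ M) := by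
      rw [hprod, claim2, hzy, hK, hM]
      simp only [Nat.add_sub_cancel]
      rw [map_mul, map_mul, map_pow, map_pow, hχa, hχb, hχz, mul_assoc]
    rw [hχimg, aux_norm_E] at hnorm_le
    omega
end

section
/- Let A ∈ GL_2(ℤ) be a 2×2 integer matrix with nonnegative entries and determinant ±1. Then there exists an automorphism φ of the free group F_2 on generators a, b such that φ(a) and φ(b) are positive words in a and b (elements of the submonoid generated by {a, b}) and the automorphism induced by φ on the abelianization F_2^{ab} ≅ ℤ² is given by the matrix A (i.e., for each i, j, the number of occurrences of the j-th generator in φ applied to the i-th generator is the (i,j) entry of A). -/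
open FreeGroup

namespace PosAut

abbrev F := FreeGroup (Fin 2)

lemma reduce_eq_self {L : List (Fin 2 × Bool)} (h : ∀ l ∈ L, l.2 = true) :
    FreeGroup.reduce L = L := by
  induction L with
  | nil => rfl
  | cons x xs ih =>
    have hx : x.2 = true := h x List.mem_cons_self
    have ihs : FreeGroup.reduce xs = xs := ih fun l hl => h l (List.mem_cons_of_mem _ hl)
    rw [FreeGroup.reduce.cons, ihs]
    cases xs with
    | nil => rfl
    | cons y ys =>
      have hy : y.2 = true := h y (by simp)
      simp [hx, hy]

lemma toWord_mul_pos {x y : F} (hx : ∀ l ∈ x.toWord, l.2 = true)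
    (hy : ∀ l ∈ y.toWord, l.2 = true) :
    (x * y).toWord = x.toWord ++ y.toWord := by
  conv_lhs => rw [← FreeGroup.mk_toWord (x := x), ← FreeGroup.mk_toWord (x := y)]
  rw [FreeGroup.mul_mk, FreeGroup.toWord_mk]
  refine reduce_eq_self ?_
  intro l hl
  rcases List.mem_append.1 hl with h | h
  exacts [hx l h, hy l h]

def Spec (φ : F →* F) (A : Matrix (Fin 2) (Fin 2) ℤ) : Prop :=
  ∀ i : Fin 2, (∀ l ∈ (φ (FreeGroup.of i)).toWord, l.2 = true) ∧
    ∀ j : Fin 2, (((φ (FreeGroup.of i)).toWord).count (j, true) : ℤ) = A i j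

lemma spec_apply_mk {χ : F →* F} {C : Matrix (Fin 2) (Fin 2) ℤ} (hχ : Spec χ C)
    (L : List (Fin 2 × Bool)) (hL : ∀ l ∈ L, l.2 = true) :
    (χ (FreeGroup.mk L)).toWord = L.flatMap (fun l => (χ (FreeGroup.of l.1)).toWord) := by
  induction L with
  | nil =>
    have h1 : FreeGroup.mk ([] : List (Fin 2 × Bool)) = 1 := rfl
    simp [h1]
  | cons x xs ih =>
    have hx : x.2 = true := hL x List.mem_cons_self
    have hxs : ∀ l ∈ xs, l.2 = true := fun l hl => hL l (List.mem_cons_of_mem _ hl)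
    have ihx := ih hxs
    have hsplit : FreeGroup.mk (x :: xs) = FreeGroup.of x.1 * FreeGroup.mk xs := by
      rw [show FreeGroup.of x.1 = FreeGroup.mk [(x.1, true)] from rfl, FreeGroup.mul_mk]
      rw [show x = (x.1, true) from Prod.ext rfl hx]
      rfl
    have hpos1 := (hχ x.1).1
    have hpos2 : ∀ l ∈ (χ (FreeGroup.mk xs)).toWord, l.2 = true := by
      rw [ihx]; intro l hl
      rcases List.mem_flatMap.1 hl with ⟨m, _, hm⟩
      exact (hχ m.1).1 l hm
    rw [hsplit, _root_.map_mul, toWord_mul_pos hpos1 hpos2, ihx, List.flatMap_cons]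

lemma count_flatMap {C : Matrix (Fin 2) (Fin 2) ℤ} (cnt : Fin 2 → List (Fin 2 × Bool))
    (hc : ∀ k j, ((cnt k).count (j, true) : ℤ) = C k j)
    (L : List (Fin 2 × Bool)) (hL : ∀ l ∈ L, l.2 = true) (j : Fin 2) :
    (((L.flatMap (fun l => cnt l.1)).count (j, true)) : ℤ) =
      (L.count (0, true) : ℤ) * C 0 j + (L.count (1, true) : ℤ) * C 1 j := by
  induction L with
  | nil => simp
  | cons x xs ih =>
    have hx : x.2 = true := hL x List.mem_cons_self
    have hxs := ih fun l hl => hL l (List.mem_cons_of_mem _ hl)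
    obtain ⟨k, b⟩ := x
    have hb : b = true := hx
    subst hb
    rw [List.flatMap_cons, List.count_append]
    push_cast
    rw [hxs]
    have hk : ∀ m : Fin 2, m = 0 ∨ m = 1 := by decide
    rcases hk k with rfl | rfl <;>
      simp only [List.count_cons, Prod.mk.injEq, and_true] <;>
      push_cast <;> rw [hc] <;> simp <;> ring

end PosAut

namespace PosAut

lemma spec_comp {φ ψ : F →* F} {B C : Matrix (Fin 2) (Fin 2) ℤ}
    (hφ : Spec φ B) (hψ : Spec ψ C) : Spec (ψ.comp φ) (B * C) := by
  intro i
  have hx := (hφ i).1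
  have hrw : (ψ.comp φ) (FreeGroup.of i) = ψ (FreeGroup.mk ((φ (FreeGroup.of i)).toWord)) := by
    simp [FreeGroup.mk_toWord]
  have hword := spec_apply_mk hψ ((φ (FreeGroup.of i)).toWord) hx
  constructor
  · rw [hrw, hword]
    intro l hl
    rcases List.mem_flatMap.1 hl with ⟨m, _, hm⟩
    exact (hψ m.1).1 l hm
  · intro j
    rw [hrw, hword, count_flatMap (fun k => (ψ (FreeGroup.of k)).toWord)
      (fun k j => (hψ k).2 j) _ hx j, (hφ i).2 0, (hφ i).2 1,
      Matrix.mul_apply, Fin.sum_univ_two]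

def r : F →* F := FreeGroup.lift (fun i : Fin 2 => if i = 0 then .of 0 * .of 1 else .of 1)
def rInv : F →* F := FreeGroup.lift (fun i : Fin 2 => if i = 0 then .of 0 * (.of 1)⁻¹ else .of 1)
def l : F →* F := FreeGroup.lift (fun i : Fin 2 => if i = 0 then .of 0 else .of 1 * .of 0)
def lInv : F →* F := FreeGroup.lift (fun i : Fin 2 => if i = 0 then .of 0 else .of 1 * (.of 0)⁻¹)

def rAut : F ≃* F := MonoidHom.toMulEquiv r rInv
  (by ext i; fin_cases i <;> simp [r, rInv, mul_assoc])
  (by ext i; fin_cases i <;> simp [r, rInv, mul_assoc])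

def lAut : F ≃* F := MonoidHom.toMulEquiv l lInv
  (by ext i; fin_cases i <;> simp [l, lInv, mul_assoc])
  (by ext i; fin_cases i <;> simp [l, lInv, mul_assoc])

def sAut : F ≃* F := FreeGroup.freeGroupCongr (Equiv.swap 0 1)

lemma toWord_of_mul_of (i j : Fin 2) :
    (FreeGroup.of i * FreeGroup.of j).toWord = [(i, true), (j, true)] := by
  rw [toWord_mul_pos] <;> simp [FreeGroup.toWord_of]

lemma spec_one : Spec (MonoidHom.id F) 1 := by
  intro i
  constructor
  · simp [FreeGroup.toWord_of]
  · intro j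
    fin_cases i <;> fin_cases j <;>
      simp [FreeGroup.toWord_of, List.count_cons, Matrix.one_apply]

lemma spec_rAut : Spec rAut.toMonoidHom !![1, 1; 0, 1] := by
  intro i
  have h0 : rAut.toMonoidHom (FreeGroup.of (0 : Fin 2)) = .of 0 * .of 1 := by
    simp [rAut, r]
  have h1 : rAut.toMonoidHom (FreeGroup.of (1 : Fin 2)) = .of 1 := by
    simp [rAut, r]
  fin_cases i
  · rw [show ((⟨0,by norm_num⟩ : Fin 2)) = 0 from rfl, h0, toWord_of_mul_of]
    refine ⟨by simp, fun j => ?_⟩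
    fin_cases j <;> simp [List.count_cons]
  · rw [show ((⟨1,by norm_num⟩ : Fin 2)) = 1 from rfl, h1, FreeGroup.toWord_of]
    refine ⟨by simp, fun j => ?_⟩
    fin_cases j <;> simp [List.count_cons]

lemma spec_lAut : Spec lAut.toMonoidHom !![1, 0; 1, 1] := by
  intro i
  have h0 : lAut.toMonoidHom (FreeGroup.of (0 : Fin 2)) = .of 0 := by
    simp [lAut, l]
  have h1 : lAut.toMonoidHom (FreeGroup.of (1 : Fin 2)) = .of 1 * .of 0 := by
    simp [lAut, l]
  fin_cases i
  · rw [show ((⟨0,by norm_num⟩ : Fin 2)) = 0 from rfl, h0, FreeGroup.toWord_of]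
    refine ⟨by simp, fun j => ?_⟩
    fin_cases j <;> simp [List.count_cons]
  · rw [show ((⟨1,by norm_num⟩ : Fin 2)) = 1 from rfl, h1, toWord_of_mul_of]
    refine ⟨by simp, fun j => ?_⟩
    fin_cases j <;> simp [List.count_cons]

lemma spec_sAut : Spec sAut.toMonoidHom !![0, 1; 1, 0] := by
  intro i
  have h0 : sAut.toMonoidHom (FreeGroup.of (0 : Fin 2)) = .of 1 := by
    simp [sAut]
  have h1 : sAut.toMonoidHom (FreeGroup.of (1 : Fin 2)) = .of 0 := by
    simp [sAut]
  fin_cases i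
  · rw [show ((⟨0,by norm_num⟩ : Fin 2)) = 0 from rfl, h0, FreeGroup.toWord_of]
    refine ⟨by simp, fun j => ?_⟩
    fin_cases j <;> simp [List.count_cons]
  · rw [show ((⟨1,by norm_num⟩ : Fin 2)) = 1 from rfl, h1, FreeGroup.toWord_of]
    refine ⟨by simp, fun j => ?_⟩
    fin_cases j <;> simp [List.count_cons]

end PosAut

namespace PosAut

lemma key : ∀ n : ℕ, ∀ A : Matrix (Fin 2) (Fin 2) ℤ,
    A 0 0 + A 0 1 + A 1 0 + A 1 1 ≤ (n : ℤ) →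
    (A.det = 1 ∨ A.det = -1) → (∀ i j, 0 ≤ A i j) →
    ∃ φ : F ≃* F, Spec φ.toMonoidHom A := by
  intro n
  induction n with
  | zero =>
    intro A hsum hdet hnn
    exfalso
    rw [Matrix.det_fin_two] at hdet
    have h00 := hnn 0 0; have h01 := hnn 0 1; have h10 := hnn 1 0; have h11 := hnn 1 1
    have : A 0 0 = 0 ∧ A 0 1 = 0 ∧ A 1 0 = 0 ∧ A 1 1 = 0 := by omega
    rcases hdet with h | h <;> rw [this.1, this.2.2.1] at h <;> simp at h
  | succ n ih =>
    intro A hsum hdet hnn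
    have hd2 : A 0 0 * A 1 1 - A 0 1 * A 1 0 = 1 ∨ A 0 0 * A 1 1 - A 0 1 * A 1 0 = -1 := by
      rwa [Matrix.det_fin_two] at hdet
    have h00 := hnn 0 0; have h01 := hnn 0 1; have h10 := hnn 1 0; have h11 := hnn 1 1
    by_cases hR : A 0 0 ≤ A 0 1 ∧ A 1 0 ≤ A 1 1
    · -- subtract column 1 from column 2, A = B * !![1,1;0,1]
      set B : Matrix (Fin 2) (Fin 2) ℤ :=
        !![A 0 0, A 0 1 - A 0 0; A 1 0, A 1 1 - A 1 0] with hB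
      have hAB : A = B * !![1, 1; 0, 1] := by
        ext i j
        fin_cases i <;> fin_cases j <;>
          simp [hB, Matrix.mul_apply, Fin.sum_univ_two] <;> ring
      have hc1 : 1 ≤ A 0 0 + A 1 0 := by
        by_contra h
        have ha : A 0 0 = 0 := by omega
        have hc : A 1 0 = 0 := by omega
        rw [ha, hc] at hd2; omega
      obtain ⟨ψ, hψ⟩ := ih B (by simp [hB]; omega)
        (by rw [hAB] at hdet
            rcases hdet with h | h <;> rw [Matrix.det_mul] at h <;>
              [left; right] <;>
              · rw [Matrix.det_fin_two] at h ⊢; simp at h ⊢; omega)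
        (by intro i j; fin_cases i <;> fin_cases j <;> simp [hB] <;> omega)
      refine ⟨ψ.trans rAut, ?_⟩
      have := spec_comp hψ spec_rAut
      rw [← hAB] at this
      intro i
      exact this i
    · by_cases hL : A 0 1 ≤ A 0 0 ∧ A 1 1 ≤ A 1 0
      · set B : Matrix (Fin 2) (Fin 2) ℤ :=
          !![A 0 0 - A 0 1, A 0 1; A 1 0 - A 1 1, A 1 1] with hB
        have hAB : A = B * !![1, 0; 1, 1] := by
          ext i j
          fin_cases i <;> fin_cases j <;>
            simp [hB, Matrix.mul_apply, Fin.sum_univ_two] <;> ring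
        have hc1 : 1 ≤ A 0 1 + A 1 1 := by
          by_contra h
          have ha : A 0 1 = 0 := by omega
          have hc : A 1 1 = 0 := by omega
          rw [ha, hc] at hd2; omega
        obtain ⟨ψ, hψ⟩ := ih B (by simp [hB]; omega)
          (by rw [hAB] at hdet
              rcases hdet with h | h <;> rw [Matrix.det_mul] at h <;>
                [left; right] <;>
                · rw [Matrix.det_fin_two] at h ⊢; simp at h ⊢; omega)
          (by intro i j; fin_cases i <;> fin_cases j <;> simp [hB] <;> omega)
        refine ⟨ψ.trans lAut, ?_⟩
        have := spec_comp hψ spec_lAut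
        rw [← hAB] at this
        intro i
        exact this i
      · -- incomparable columns: A is the identity or the swap matrix
        rcases (by omega : (A 0 1 < A 0 0 ∧ A 1 0 < A 1 1) ∨
            (A 0 0 < A 0 1 ∧ A 1 1 < A 1 0)) with ⟨h1, h2⟩ | ⟨h1, h2⟩
        · have hmul : (A 0 1 + 1) * (A 1 0 + 1) ≤ A 0 0 * A 1 1 :=
            mul_le_mul (by omega) (by omega) (by omega) (by omega)
          have hkey : A 0 1 + A 1 0 + 1 ≤ A 0 0 * A 1 1 - A 0 1 * A 1 0 := by nlinarith
          rcases hd2 with hdd | hdd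
          · have hb0 : A 0 1 = 0 := by linarith
            have hc0 : A 1 0 = 0 := by linarith
            have had : A 0 0 * A 1 1 = 1 := by rw [hb0, hc0] at hdd; linarith
            have ha1 : A 0 0 = 1 ∧ A 1 1 = 1 := by
              rcases Int.mul_eq_one_iff_eq_one_or_neg_one.1 had with ⟨x, y⟩ | ⟨x, y⟩
              · exact ⟨x, y⟩
              · omega
            have hA1 : A = 1 := by
              ext i j
              fin_cases i <;> fin_cases j <;>
                simp [Matrix.one_apply, ha1.1, ha1.2, hb0, hc0]
            exact ⟨MulEquiv.refl F, by rw [hA1]; intro i; exact spec_one i⟩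
          · exfalso; linarith
        · have hmul : (A 0 0 + 1) * (A 1 1 + 1) ≤ A 0 1 * A 1 0 :=
            mul_le_mul (by omega) (by omega) (by omega) (by omega)
          have hkey : A 0 0 + A 1 1 + 1 ≤ A 0 1 * A 1 0 - A 0 0 * A 1 1 := by nlinarith
          rcases hd2 with hdd | hdd
          · exfalso; linarith
          · have hb0 : A 0 0 = 0 := by linarith
            have hc0 : A 1 1 = 0 := by linarith
            have had : A 0 1 * A 1 0 = 1 := by rw [hb0, hc0] at hdd; linarith
            have ha1 : A 0 1 = 1 ∧ A 1 0 = 1 := by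
              rcases Int.mul_eq_one_iff_eq_one_or_neg_one.1 had with ⟨x, y⟩ | ⟨x, y⟩
              · exact ⟨x, y⟩
              · omega
            have hA1 : A = !![0, 1; 1, 0] := by
              ext i j
              fin_cases i <;> fin_cases j <;>
                simp [ha1.1, ha1.2, hb0, hc0]
            exact ⟨sAut, by rw [hA1]; intro i; exact spec_sAut i⟩

end PosAut

/-- Proposition 5.6: for any `A ∈ GL₂(ℤ)` with nonnegative entries there is a
positive automorphism of the free group of rank 2 abelianizing to `A`: an automorphism `φ`
such that each `φ(gᵢ)` is a positive word, the number of occurrences of the `j`-th generator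
in `φ(gᵢ)` being the `(i,j)` entry of `A`. -/
theorem positive_automorphism_of_nonneg_GL2 (A : Matrix (Fin 2) (Fin 2) ℤ)
    (hdet : A.det = 1 ∨ A.det = -1) (hnn : ∀ i j, 0 ≤ A i j) :
    ∃ φ : FreeGroup (Fin 2) ≃* FreeGroup (Fin 2),
      ∀ i : Fin 2,
        (∀ l ∈ (φ (FreeGroup.of i)).toWord, l.2 = true) ∧
        ∀ j : Fin 2, (((φ (FreeGroup.of i)).toWord).count (j, true) : ℤ) = A i j := by
  obtain ⟨φ, hφ⟩ := PosAut.key (A 0 0 + A 0 1 + A 1 0 + A 1 1).toNat A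
    (by have h00 := hnn 0 0; have h01 := hnn 0 1; have h10 := hnn 1 0; have h11 := hnn 1 1
        omega) hdet hnn
  exact ⟨φ, hφ⟩
end
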